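/- Let λ ≥ 0. Assume L̄|[0,+∞) is proper and L̄(t) < +∞ for some t > λ. Then there exists ε > 0 such that for every t ∈ (λ, λ+ε) one has L̄(t) = sup_{x∈ℝ} (t·x − l₀(x)), and this supremum is attained at some x_t ∈ ℝ, i.e. L̄(t) = t·x_t − l₀(x_t). -/

import Mathlib

open Filter MeasureTheory Set Topology

noncomputable section

/-- `c · log m` as an extended real number, where `m ∈ [0,∞]`. -/
def elog (c : ℝ) (m : ENNReal) : EReal := (c : EReal) * ENNReal.log m

/-- The generalized log-moment generating function `L̄` associated with the net
`(μ_α, c_α)` indexed by the filter `lf`: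
`L̄(t) = limsup_α c_α · log ∫ exp(t·x/c_α) dμ_α(x)`. -/
def genLogMGF {ι : Type*} (lf : Filter ι) (μ : ι → Measure ℝ) (c : ι → ℝ) (t : ℝ) : EReal :=
  Filter.limsup
    (fun i => elog (c i) (∫⁻ x : ℝ, ENNReal.ofReal (Real.exp (t * x / c i)) ∂ (μ i))) lf

/-- Legendre–Fenchel transform of an `EReal`-valued function on `ℝ`, evaluated at an
extended real argument: `L*(x) = sup_t (t·x − L(t))`. -/
def LegendreEE (L : ℝ → EReal) (x : EReal) : EReal := ⨆ t : ℝ, ((t : EReal) * x - L t)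

open Classical in
/-- The right derivative of a convex `EReal`-valued function at `t`, with the conventions
`L'_r(t) = +∞` when `L(s) = +∞` for all `s > t` and `L'_r(t) = -∞` when `L(s) = -∞` for
some `s > t`; otherwise it is the infimum of the right difference quotients. -/
def rightDerivE (L : ℝ → EReal) (t : ℝ) : EReal :=
  if ∀ s : ℝ, t < s → L s = ⊤ then ⊤
  else if ∃ s : ℝ, t < s ∧ L s = ⊥ then ⊥
  else ⨅ s ∈ Set.Ioi t, (L s - L t) * (((s - t)⁻¹ : ℝ) : EReal)

/-- The left derivative of a convex `EReal`-valued function at `t` (supremum of left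
difference quotients). -/
def leftDerivE (L : ℝ → EReal) (t : ℝ) : EReal :=
  ⨆ s ∈ Set.Iio t, (L t - L s) * (((t - s)⁻¹ : ℝ) : EReal)

/-- Right limit at `a` of an `EReal`-valued function (as a `limsup`; it coincides with
`lim_{t→a⁺} f(t)` whenever the latter exists, e.g. for monotone or convex `f`). -/
def rightLimE (f : ℝ → EReal) (a : ℝ) : EReal := Filter.limsup f (nhdsWithin a (Set.Ioi a))

/-- Left limit at `a` of an `EReal`-valued function (as a `limsup`; it coincides with
`lim_{t→a⁻} f(t)` whenever the latter exists). -/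
def leftLimE (f : ℝ → EReal) (a : ℝ) : EReal := Filter.limsup f (nhdsWithin a (Set.Iio a))

/-- `L` is affine on the interval `(a, b]`. -/
def AffineOnIoc (L : ℝ → EReal) (a b : ℝ) : Prop :=
  ∃ p q : ℝ, ∀ s ∈ Set.Ioc a b, L s = ((p * s + q : ℝ) : EReal)

/-- `λ̃ = sup {t > λ : L is affine on (λ, t]}` (equal to `λ` if there is no such `t`). -/
def tildeOf (L : ℝ → EReal) (lam : ℝ) : ℝ :=
  sSup (insert lam {t : ℝ | lam < t ∧ AffineOnIoc L lam t})

/-- Differentiability at `t` of an `EReal`-valued function: `L(t)` is finite and the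
difference quotients converge to a (finite) real number. -/
def EDifferentiableAt (L : ℝ → EReal) (t : ℝ) : Prop :=
  (∃ r : ℝ, L t = (r : EReal)) ∧
  ∃ d : ℝ, Filter.Tendsto (fun s => (L s - L t) * (((s - t)⁻¹ : ℝ) : EReal))
    (nhdsWithin t {t}ᶜ) (nhds (d : EReal))

/-- The function `l₀(x) = − lim_{ε→0⁺} limsup_α c_α · log μ_α((x−ε, x+ε))` (the limit over
`ε` exists by monotonicity and equals the infimum). -/
def l0fun {ι : Type*} (lf : Filter ι) (μ : ι → Measure ℝ) (c : ι → ℝ) (x : ℝ) : EReal :=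
  - ⨅ ε ∈ Set.Ioi (0:ℝ),
      Filter.limsup (fun i => elog (c i) (μ i (Set.Ioo (x - ε) (x + ε)))) lf

/-- `L` restricted to `[0,∞)` is proper: `(−∞,+∞]`-valued with at least one finite value. -/
def LbarProper (L : ℝ → EReal) : Prop :=
  (∀ t : ℝ, 0 ≤ t → L t ≠ ⊥) ∧ ∃ t : ℝ, 0 ≤ t ∧ L t ≠ ⊤

/-- `μ([x, y])` for extended-real endpoints `x, y`, with `μ` regarded as a measure on
`[-∞, +∞]`. -/
def muIccE (μ : Measure ℝ) (x y : EReal) : ENNReal :=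
  μ {z : ℝ | x ≤ (z : EReal) ∧ (z : EReal) ≤ y}

/-- `μ((x, y))` for extended-real endpoints `x, y`. -/
def muIooE (μ : Measure ℝ) (x y : EReal) : ENNReal :=
  μ {z : ℝ | x < (z : EReal) ∧ (z : EReal) < y}

open Classical in
/-- The Legendre transform extended to `[-∞,+∞]` by continuity, with the paper's
convention `L̄*(−∞) = −L̄(0⁺)`. -/
def LegendreExt (L : ℝ → EReal) (x : EReal) : EReal :=
  if x = ⊥ then -(rightLimE L 0) else if x = ⊤ then ⊤ else LegendreEE L x

end

/-!
Chebyshev's inequality gives `t x - l₀(x) ≤ L̄(t)` for every `x` and `t ≥ 0`. Conversely, `L̄` is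
finite and convex on `[0, t₀]`; let `x_t` be its left derivative at `t`. Given `ε > 0`, pick
`s₁ < s < t` such that the chord of `L̄` over `[s₁, s]` has slope `> x_t - ε`, while the chord over
`[s, t]` has slope `≤ x_t`. Splitting `∫ exp(s y / c) dμ` at `x_t ± ε` and bounding the two tails
by exponential tilting with the integrals at `s₁` and `t`, the principle of the largest term shows
that the window `(x_t - ε, x_t + ε)` alone carries `L̄(s)`; letting `ε → 0` gives
`-l₀(x_t) ≥ L̄(t) - t x_t`.
-/

section ELog

variable {c : ℝ}

lemma elog_mono (hc : 0 ≤ c) : Monotone (elog c) := fun _ _ h =>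
  mul_le_mul_of_nonneg_left (ENNReal.log_monotone h) (by exact_mod_cast hc)

lemma elog_mul (hc : 0 ≤ c) (a b : ENNReal) : elog c (a * b) = elog c a + elog c b := by
  rw [elog, ENNReal.log_mul_add,
    EReal.left_distrib_of_nonneg_of_ne_top (by exact_mod_cast hc) (EReal.coe_ne_top c)]
  rfl

lemma elog_rpow (m : ENNReal) (η : ℝ) : elog c (m ^ η) = η * elog c m := by
  rw [elog, elog, ENNReal.log_rpow, mul_left_comm]

lemma elog_ofReal_exp (r : ℝ) :
    elog c (ENNReal.ofReal (Real.exp r)) = ((c * r : ℝ) : EReal) := by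
  rw [elog, ENNReal.log_ofReal_of_pos (Real.exp_pos r), Real.log_exp, EReal.coe_mul]

lemma elog_two_mul (hc : 0 ≤ c) (m : ENNReal) :
    elog c (2 * m) = ((c * Real.log 2 : ℝ) : EReal) + elog c m := by
  have h2 : (2 : ENNReal) = ENNReal.ofReal 2 := by norm_num
  rw [elog_mul hc, h2, elog, ENNReal.log_ofReal_of_pos two_pos, EReal.coe_mul]

end ELog

section Limsup

variable {ι : Type*} {lf : Filter ι} [lf.NeBot] {c : ι → ℝ}

lemma EReal.limsup_coe_add (r : ℝ) (u : ι → EReal) :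
    limsup (fun i => (r : EReal) + u i) lf = r + limsup u lf :=
  ((monotone_id.const_add (r : EReal)).map_limsup_of_continuousAt u
    ((EReal.continuousAt_add (.inl (EReal.coe_ne_top r)) (.inl (EReal.coe_ne_bot r))).comp
      (continuous_const.prodMk continuous_id).continuousAt)).symm

lemma limsup_elog_ofReal_exp_mul (hc : ∀ i, 0 < c i) (K : ℝ) (m : ι → ENNReal) :
    limsup (fun i => elog (c i) (ENNReal.ofReal (Real.exp (K / c i)) * m i)) lf
      = K + limsup (fun i => elog (c i) (m i)) lf := by
  have h : ∀ i, elog (c i) (ENNReal.ofReal (Real.exp (K / c i)) * m i)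
      = (K : EReal) + elog (c i) (m i) := fun i => by
    rw [elog_mul (hc i).le, elog_ofReal_exp, mul_div_cancel₀ _ (hc i).ne']
  simp_rw [h]
  exact EReal.limsup_coe_add _ _

/-- The principle of the largest term. -/
lemma limsup_elog_add_le_max (hc : ∀ i, 0 < c i) (hc0 : Tendsto c lf (𝓝 0))
    (a b : ι → ENNReal) :
    limsup (fun i => elog (c i) (a i + b i)) lf
      ≤ max (limsup (fun i => elog (c i) (a i)) lf) (limsup (fun i => elog (c i) (b i)) lf) := by
  have hpt : ∀ i, elog (c i) (a i + b i)
      ≤ ((c i * Real.log 2 : ℝ) : EReal) + max (elog (c i) (a i)) (elog (c i) (b i)) := by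
    intro i
    rw [← (elog_mono (hc i).le).map_max, ← elog_two_mul (hc i).le, two_mul]
    exact elog_mono (hc i).le (add_le_add (le_max_left _ _) (le_max_right _ _))
  have hlog2 : limsup (fun i => ((c i * Real.log 2 : ℝ) : EReal)) lf = 0 := by
    have h : Tendsto (fun i => c i * Real.log 2) lf (𝓝 0) := by
      simpa using hc0.mul_const (Real.log 2)
    exact ((continuous_coe_real_ereal.tendsto 0).comp h).limsup_eq
  calc limsup (fun i => elog (c i) (a i + b i)) lf
      ≤ limsup (fun i => ((c i * Real.log 2 : ℝ) : EReal)
          + max (elog (c i) (a i)) (elog (c i) (b i))) lf :=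
        limsup_le_limsup (Eventually.of_forall hpt)
    _ ≤ limsup (fun i => ((c i * Real.log 2 : ℝ) : EReal)) lf
          + limsup (fun i => max (elog (c i) (a i)) (elog (c i) (b i))) lf :=
        EReal.limsup_add_le (by rw [hlog2]; simp) (by rw [hlog2]; simp)
    _ = _ := by rw [hlog2, zero_add, limsup_max]

end Limsup

noncomputable def scaledMGF (μ : Measure ℝ) (c t : ℝ) : ENNReal :=
  ∫⁻ x, ENNReal.ofReal (Real.exp (t * x / c)) ∂μ

section MGF

variable {ι : Type*} {lf : Filter ι} {μ : ι → Measure ℝ} {c : ι → ℝ}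

lemma genLogMGF_eq_limsup (t : ℝ) :
    genLogMGF lf μ c t = limsup (fun i => elog (c i) (scaledMGF (μ i) (c i) t)) lf := rfl

lemma genLogMGF_zero [lf.NeBot] [∀ i, IsProbabilityMeasure (μ i)] :
    genLogMGF lf μ c 0 = 0 := by
  simp [genLogMGF, elog]

lemma scaledMGF_le_rpow_mul_rpow (ν : Measure ℝ) (d : ℝ) {wa wb : ℝ} (hwa : 0 ≤ wa)
    (hwb : 0 ≤ wb) (hw : wa + wb = 1) (a b : ℝ) :
    scaledMGF ν d (wa * a + wb * b) ≤ scaledMGF ν d a ^ wa * scaledMGF ν d b ^ wb := by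
  have hpt : ∀ x, ENNReal.ofReal (Real.exp ((wa * a + wb * b) * x / d))
      = ENNReal.ofReal (Real.exp (a * x / d)) ^ wa
        * ENNReal.ofReal (Real.exp (b * x / d)) ^ wb := by
    intro x
    rw [ENNReal.ofReal_rpow_of_pos (Real.exp_pos _), ENNReal.ofReal_rpow_of_pos (Real.exp_pos _),
      ← Real.exp_mul, ← Real.exp_mul, ← ENNReal.ofReal_mul (Real.exp_pos _).le, ← Real.exp_add]
    ring_nf
  simp_rw [scaledMGF, hpt]
  exact ENNReal.lintegral_mul_norm_pow_le (by fun_prop) (by fun_prop) hwa hwb hw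

variable (hc : ∀ i, 0 < c i)
include hc

lemma genLogMGF_mul_add_mul_le [lf.NeBot] {a b ra rb wa wb : ℝ} (hwa : 0 ≤ wa) (hwb : 0 ≤ wb)
    (hw : wa + wb = 1) (ha : genLogMGF lf μ c a = ra) (hb : genLogMGF lf μ c b = rb) :
    genLogMGF lf μ c (wa * a + wb * b) ≤ ((wa * ra + wb * rb : ℝ) : EReal) := by
  have hpt : ∀ i, elog (c i) (scaledMGF (μ i) (c i) (wa * a + wb * b))
      ≤ wa * elog (c i) (scaledMGF (μ i) (c i) a)
        + wb * elog (c i) (scaledMGF (μ i) (c i) b) := by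
    intro i
    rw [← elog_rpow, ← elog_rpow, ← elog_mul (hc i).le]
    exact elog_mono (hc i).le (scaledMGF_le_rpow_mul_rpow _ _ hwa hwb hw a b)
  have hlim : ∀ {w u r : ℝ}, 0 ≤ w → genLogMGF lf μ c u = r →
      limsup (fun i => (w : EReal) * elog (c i) (scaledMGF (μ i) (c i) u)) lf
        = ((w * r : ℝ) : EReal) :=
    fun hw hu => by
      rw [EReal.limsup_const_mul_of_nonneg_of_ne_top (by exact_mod_cast hw) (EReal.coe_ne_top _),
        ← genLogMGF_eq_limsup, hu, EReal.coe_mul]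
  calc genLogMGF lf μ c (wa * a + wb * b)
      ≤ limsup (fun i => (wa : EReal) * elog (c i) (scaledMGF (μ i) (c i) a)
          + wb * elog (c i) (scaledMGF (μ i) (c i) b)) lf :=
        limsup_le_limsup (Eventually.of_forall hpt)
    _ ≤ ((wa * ra : ℝ) : EReal) + ((wb * rb : ℝ) : EReal) := by
        refine (EReal.limsup_add_le ?_ ?_).trans_eq ?_ <;> rw [hlim hwa ha, hlim hwb hb]
        exacts [.inl (EReal.coe_ne_bot _), .inl (EReal.coe_ne_top _)]
    _ = _ := by norm_cast

lemma genLogMGF_ne_top_of_mem_Icc [lf.NeBot] {a b s ra rb : ℝ} (hs : s ∈ Icc a b)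
    (ha : genLogMGF lf μ c a = ra) (hb : genLogMGF lf μ c b = rb) : genLogMGF lf μ c s ≠ ⊤ := by
  rcases hs.1.eq_or_lt with rfl | has
  · simp [ha]
  have hab : 0 < b - a := by linarith [hs.2]
  have hcomb : (b - s) / (b - a) * a + (s - a) / (b - a) * b = s := by field_simp; ring
  have hle := genLogMGF_mul_add_mul_le hc (wa := (b - s) / (b - a)) (wb := (s - a) / (b - a))
    (div_nonneg (by linarith [hs.2]) hab.le)
    (div_nonneg (by linarith) hab.le) (by field_simp; ring) ha hb
  rw [hcomb] at hle
  exact ne_top_of_le_ne_top (EReal.coe_ne_top _) hle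

lemma convexOn_toReal_genLogMGF [lf.NeBot] {S : Set ℝ} (hS : Convex ℝ S)
    (hfin : ∀ s ∈ S, genLogMGF lf μ c s ≠ ⊤ ∧ genLogMGF lf μ c s ≠ ⊥) :
    ConvexOn ℝ S fun s => (genLogMGF lf μ c s).toReal := by
  refine ⟨hS, fun a ha b hb wa wb hwa hwb hw => ?_⟩
  have hcoe : ∀ s ∈ S, genLogMGF lf μ c s = (genLogMGF lf μ c s).toReal := fun s hs =>
    (EReal.coe_toReal (hfin s hs).1 (hfin s hs).2).symm
  have hle := genLogMGF_mul_add_mul_le hc hwa hwb hw (hcoe a ha) (hcoe b hb)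
  rw [hcoe (wa * a + wb * b) (hS ha hb hwa hwb hw)] at hle
  exact_mod_cast hle

end MGF

noncomputable def ballRate {ι : Type*} (lf : Filter ι) (μ : ι → Measure ℝ) (c : ι → ℝ)
    (x ε : ℝ) : EReal :=
  limsup (fun i => elog (c i) (μ i (Ioo (x - ε) (x + ε)))) lf

section Bounds

variable {ι : Type*} {lf : Filter ι} {μ : ι → Measure ℝ} {c : ι → ℝ} (hc : ∀ i, 0 < c i)
include hc

lemma ballRate_mono (x : ℝ) {ε ε' : ℝ} (h : ε ≤ ε') :
    ballRate lf μ c x ε ≤ ballRate lf μ c x ε' :=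
  limsup_le_limsup (Eventually.of_forall fun i =>
    elog_mono (hc i).le (measure_mono (Ioo_subset_Ioo (by linarith) (by linarith))))

lemma coe_le_neg_l0fun {x r K : ℝ}
    (h : ∀ ε > 0, ((r - K * ε : ℝ) : EReal) ≤ ballRate lf μ c x ε) :
    (r : EReal) ≤ -l0fun lf μ c x := by
  rw [l0fun, neg_neg]
  have hlim : Tendsto (fun δ : ℝ => ((r - K * δ : ℝ) : EReal)) (𝓝[>] 0) (𝓝 r) :=
    (continuous_coe_real_ereal.tendsto r).comp <| tendsto_nhdsWithin_of_tendsto_nhds <|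
      (by fun_prop : Continuous fun δ : ℝ => r - K * δ).tendsto' 0 r (by simp)
  refine le_iInf₂ fun ε (hε : 0 < ε) => le_of_tendsto hlim ?_
  filter_upwards [Ioo_mem_nhdsGT hε] with δ hδ
  exact (h δ hδ.1).trans (ballRate_mono hc x hδ.2.le)

variable [lf.NeBot]

lemma coe_mul_add_ballRate_le {t : ℝ} (ht : 0 ≤ t) (x ε : ℝ) :
    ((t * (x - ε) : ℝ) : EReal) + ballRate lf μ c x ε ≤ genLogMGF lf μ c t := by
  rw [ballRate, ← limsup_elog_ofReal_exp_mul hc]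
  refine limsup_le_limsup (Eventually.of_forall fun i => elog_mono (hc i).le ?_)
  rw [← lintegral_indicator_const measurableSet_Ioo]
  refine lintegral_mono fun y => ?_
  by_cases hy : y ∈ Ioo (x - ε) (x + ε)
  · rw [indicator_of_mem hy]
    gcongr
    exacts [(hc i).le, hy.1.le]
  · simp [hy]

lemma coe_mul_sub_l0fun_le {t : ℝ} (ht : 0 ≤ t) (x : ℝ) :
    ((t * x : ℝ) : EReal) - l0fun lf μ c x ≤ genLogMGF lf μ c t := by
  rw [sub_eq_add_neg, l0fun, neg_neg]
  have hlim : Tendsto (fun ε : ℝ => ((t * (x - ε) : ℝ) : EReal)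
      + ⨅ ε ∈ Ioi (0 : ℝ), ballRate lf μ c x ε) (𝓝[>] 0)
      (𝓝 (((t * x : ℝ) : EReal) + ⨅ ε ∈ Ioi (0 : ℝ), ballRate lf μ c x ε)) := by
    have h : Tendsto (fun ε : ℝ => t * (x - ε)) (𝓝[>] 0) (𝓝 (t * x)) :=
      tendsto_nhdsWithin_of_tendsto_nhds <|
        (by fun_prop : Continuous fun ε : ℝ => t * (x - ε)).tendsto' 0 (t * x) (by simp)
    exact (EReal.continuousAt_add (.inl (EReal.coe_ne_top _))
      (.inl (EReal.coe_ne_bot _))).tendsto.comp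
        (((continuous_coe_real_ereal.tendsto _).comp h).prodMk_nhds tendsto_const_nhds)
  refine le_of_tendsto hlim ?_
  filter_upwards [self_mem_nhdsWithin] with ε (hε : 0 < ε)
  exact (add_le_add_right (iInf₂_le ε hε) _).trans (coe_mul_add_ballRate_le hc ht x ε)

end Bounds

section Tilting

lemma ofReal_exp_le_tilted_sum {d t s₁ s₂ x ε : ℝ} (hd : 0 < d) (ht : 0 ≤ t) (h₁ : s₁ < t)
    (h₂ : t < s₂) (y : ℝ) :
    ENNReal.ofReal (Real.exp (t * y / d))
      ≤ ENNReal.ofReal (Real.exp ((t - s₁) * (x - ε) / d))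
          * ENNReal.ofReal (Real.exp (s₁ * y / d))
        + (Ioo (x - ε) (x + ε)).indicator
            (fun _ => ENNReal.ofReal (Real.exp (t * (x + ε) / d))) y
        + ENNReal.ofReal (Real.exp (-((s₂ - t) * (x + ε)) / d))
          * ENNReal.ofReal (Real.exp (s₂ * y / d)) := by
  simp_rw [← ENNReal.ofReal_mul (Real.exp_pos _).le, ← Real.exp_add, ← add_div]
  rcases le_or_gt y (x - ε) with hy | hy
  · refine le_add_right (le_add_right ?_)
    gcongr
    nlinarith
  rcases lt_or_ge y (x + ε) with hy' | hy'
  · refine le_add_right (le_add_left ?_)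
    rw [indicator_of_mem (show y ∈ Ioo (x - ε) (x + ε) from ⟨hy, hy'⟩)]
    gcongr
  · refine le_add_left ?_
    gcongr
    nlinarith

lemma scaledMGF_le_tilted_sum (ν : Measure ℝ) {d t s₁ s₂ : ℝ} (hd : 0 < d) (ht : 0 ≤ t)
    (h₁ : s₁ < t) (h₂ : t < s₂) (x ε : ℝ) :
    scaledMGF ν d t
      ≤ ENNReal.ofReal (Real.exp ((t - s₁) * (x - ε) / d)) * scaledMGF ν d s₁
        + ENNReal.ofReal (Real.exp (t * (x + ε) / d)) * ν (Ioo (x - ε) (x + ε))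
        + ENNReal.ofReal (Real.exp (-((s₂ - t) * (x + ε)) / d)) * scaledMGF ν d s₂ := by
  calc scaledMGF ν d t ≤ ∫⁻ y, (ENNReal.ofReal (Real.exp ((t - s₁) * (x - ε) / d))
          * ENNReal.ofReal (Real.exp (s₁ * y / d))
        + (Ioo (x - ε) (x + ε)).indicator
            (fun _ => ENNReal.ofReal (Real.exp (t * (x + ε) / d))) y
        + ENNReal.ofReal (Real.exp (-((s₂ - t) * (x + ε)) / d))
          * ENNReal.ofReal (Real.exp (s₂ * y / d))) ∂ν :=
        lintegral_mono (ofReal_exp_le_tilted_sum hd ht h₁ h₂)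
    _ = _ := by
        rw [lintegral_add_right _ (by fun_prop), lintegral_add_right _
          ((measurable_const.indicator measurableSet_Ioo)), lintegral_const_mul _ (by fun_prop),
          lintegral_indicator_const measurableSet_Ioo, lintegral_const_mul _ (by fun_prop)]
        rfl

variable {ι : Type*} {lf : Filter ι} [lf.NeBot] {μ : ι → Measure ℝ} {c : ι → ℝ}

lemma le_ballRate_of_slope_bounds (hc : ∀ i, 0 < c i) (hc0 : Tendsto c lf (𝓝 0))
    {s₁ s w x ε r₁ r rw : ℝ} (hs : 0 ≤ s) (hs₁ : s₁ < s) (hw : s < w)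
    (h₁ : genLogMGF lf μ c s₁ = r₁) (hr : genLogMGF lf μ c s = r)
    (hrw : genLogMGF lf μ c w = rw)
    (hleft : r₁ + (s - s₁) * (x - ε) < r) (hright : rw - (w - s) * (x + ε) < r) :
    ((r - s * (x + ε) : ℝ) : EReal) ≤ ballRate lf μ c x ε := by
  have hmax : (r : EReal) ≤ max (max (((s - s₁) * (x - ε) + r₁ : ℝ) : EReal)
      (((s * (x + ε) : ℝ) : EReal) + ballRate lf μ c x ε))
      ((-((w - s) * (x + ε)) + rw : ℝ) : EReal) :=
    calc (r : EReal) = genLogMGF lf μ c s := hr.symm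
      _ ≤ limsup (fun i => elog (c i)
            (ENNReal.ofReal (Real.exp ((s - s₁) * (x - ε) / c i)) * scaledMGF (μ i) (c i) s₁
            + ENNReal.ofReal (Real.exp (s * (x + ε) / c i)) * μ i (Ioo (x - ε) (x + ε))
            + ENNReal.ofReal (Real.exp (-((w - s) * (x + ε)) / c i)) * scaledMGF (μ i) (c i) w))
            lf :=
          limsup_le_limsup (Eventually.of_forall fun i => elog_mono (hc i).le
            (scaledMGF_le_tilted_sum (μ i) (hc i) hs hs₁ hw x ε))
      _ ≤ _ := (limsup_elog_add_le_max hc hc0 _ _).trans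
            (max_le_max (limsup_elog_add_le_max hc hc0 _ _) le_rfl)
      _ = _ := by
          simp_rw [limsup_elog_ofReal_exp_mul hc, ← genLogMGF_eq_limsup, h₁, hrw, EReal.coe_add]
          rfl
  have hmid : (r : EReal) ≤ ((s * (x + ε) : ℝ) : EReal) + ballRate lf μ c x ε := by
    rcases le_max_iff.1 hmax with h | h
    · rcases le_max_iff.1 h with h | h
      · exact absurd (EReal.coe_le_coe_iff.1 h) (by linarith)
      · exact h
    · exact absurd (EReal.coe_le_coe_iff.1 h) (by linarith)
  rwa [EReal.coe_sub, EReal.sub_le_iff_le_add (.inl (EReal.coe_ne_bot _))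
    (.inl (EReal.coe_ne_top _)), add_comm]

end Tilting

lemma ConvexOn.exists_lt_slope_of_lt_leftDeriv {S : Set ℝ} {f : ℝ → ℝ} {t y : ℝ}
    (hf : ConvexOn ℝ S f) (ht : t ∈ interior S) (hy : y < derivWithin f (Iio t) t) :
    ∃ s₁ s, s₁ ∈ S ∧ s₁ < s ∧ s < t ∧ y < slope f s₁ s := by
  have hd := hf.hasDerivWithinAt_leftDeriv_of_mem_interior ht
  have hslope := (hasDerivWithinAt_iff_tendsto_slope' self_notMem_Iio).1 hd
  obtain ⟨s₁, ⟨hys₁, hs₁S⟩, hs₁t⟩ := ((hslope.eventually (lt_mem_nhds hy)).and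
    (mem_nhdsWithin_of_mem_nhds (mem_interior_iff_mem_nhds.1 ht))).and self_mem_nhdsWithin
    |>.exists
  rw [slope_comm] at hys₁
  have hcont : ContinuousWithinAt (fun s => (f s - f s₁) / (s - s₁)) (Iio t) t :=
    (hd.continuousWithinAt.sub continuousWithinAt_const).div
      (continuousWithinAt_id.sub continuousWithinAt_const) (sub_ne_zero.2 (ne_of_gt hs₁t))
  rw [slope_def_field] at hys₁
  obtain ⟨s, hys, hs⟩ :=
    ((hcont.eventually (lt_mem_nhds hys₁)).and (Ioo_mem_nhdsLT hs₁t)).exists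
  exact ⟨s₁, s, hs₁S, hs.1, hs.2, by rwa [slope_def_field]⟩

section Main

variable {ι : Type*} {lf : Filter ι} [lf.NeBot] {μ : ι → Measure ℝ} {c : ι → ℝ}

lemma genLogMGF_le_mul_leftDeriv_sub_l0fun (hc : ∀ i, 0 < c i) (hc0 : Tendsto c lf (𝓝 0))
    {l : ℝ → ℝ} {t₀ t : ℝ} (hl : ∀ s ∈ Icc 0 t₀, genLogMGF lf μ c s = l s)
    (hconv : ConvexOn ℝ (Icc 0 t₀) l) (ht : t ∈ Ioo 0 t₀) :
    genLogMGF lf μ c t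
      ≤ ((t * derivWithin l (Iio t) t : ℝ) : EReal)
        - l0fun lf μ c (derivWithin l (Iio t) t) := by
  set y := derivWithin l (Iio t) t
  have htS : t ∈ interior (Icc 0 t₀) := by rwa [interior_Icc]
  have hball : ∀ ε > 0, ((l t - t * y - t * ε : ℝ) : EReal) ≤ ballRate lf μ c y ε := by
    intro ε hε
    obtain ⟨s₁, s, hs₁, hs₁s, hst, hslope⟩ :=
      hconv.exists_lt_slope_of_lt_leftDeriv htS (sub_lt_self y hε)
    have hs : s ∈ Icc 0 t₀ := ⟨hs₁.1.trans hs₁s.le, hst.le.trans ht.2.le⟩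
    have hchord : slope l s t ≤ y := hconv.slope_le_leftDeriv_of_mem_interior hs htS hst
    rw [slope_def_field, lt_div_iff₀ (sub_pos.2 hs₁s)] at hslope
    rw [slope_def_field, div_le_iff₀ (sub_pos.2 hst)] at hchord
    have hgap : 0 < (t - s) * ε := mul_pos (sub_pos.2 hst) hε
    refine le_trans ?_ (le_ballRate_of_slope_bounds hc hc0 hs.1 hs₁s hst (hl s₁ hs₁)
      (hl s hs) (hl t (interior_subset htS)) (by linarith) (by linarith))
    exact_mod_cast (by linarith : l t - t * y - t * ε ≤ l s - s * (y + ε))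
  rw [hl t (interior_subset htS), sub_eq_add_neg]
  calc (l t : EReal) = ((t * y : ℝ) : EReal) + ((l t - t * y : ℝ) : EReal) := by
        rw [← EReal.coe_add, add_sub_cancel]
    _ ≤ _ := add_le_add_right (coe_le_neg_l0fun hc hball) _

end Main

theorem statement13
    {ι : Type*} (lf : Filter ι) [lf.NeBot]
    (μ : ι → Measure ℝ) [∀ i, IsProbabilityMeasure (μ i)]
    (c : ι → ℝ) (hc : ∀ i, 0 < c i) (hc0 : Filter.Tendsto c lf (nhds (0 : ℝ)))
    (L : ℝ → EReal) (hL : L = genLogMGF lf μ c)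
    (lam : ℝ) (hlam : 0 ≤ lam) (hp : LbarProper L)
    (hfin : ∃ t : ℝ, lam < t ∧ L t ≠ ⊤) :
    ∃ e : ℝ, 0 < e ∧ ∀ t ∈ Set.Ioo lam (lam + e),
      L t = (⨆ x : ℝ, (((t * x : ℝ)) : EReal) - l0fun lf μ c x) ∧
      ∃ xt : ℝ, L t = (((t * xt : ℝ)) : EReal) - l0fun lf μ c xt := by
  subst hL
  obtain ⟨t₀, hlam_t₀, ht₀⟩ := hfin
  have hfinite : ∀ s ∈ Icc 0 t₀, genLogMGF lf μ c s ≠ ⊤ ∧ genLogMGF lf μ c s ≠ ⊥ :=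
    fun s hs => ⟨genLogMGF_ne_top_of_mem_Icc hc hs (genLogMGF_zero.trans EReal.coe_zero.symm)
      (EReal.coe_toReal ht₀ (hp.1 t₀ (hlam.trans hlam_t₀.le))).symm, hp.1 s hs.1⟩
  set l := fun s => (genLogMGF lf μ c s).toReal
  have hl : ∀ s ∈ Icc 0 t₀, genLogMGF lf μ c s = l s := fun s hs =>
    (EReal.coe_toReal (hfinite s hs).1 (hfinite s hs).2).symm
  refine ⟨t₀ - lam, sub_pos.2 hlam_t₀, fun t ht => ?_⟩
  have ht' : t ∈ Ioo 0 t₀ := ⟨hlam.trans_lt ht.1, by linarith [ht.2]⟩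
  have hupper : ∀ x : ℝ, ((t * x : ℝ) : EReal) - l0fun lf μ c x ≤ genLogMGF lf μ c t :=
    coe_mul_sub_l0fun_le hc ht'.1.le
  have hlower := genLogMGF_le_mul_leftDeriv_sub_l0fun hc hc0 hl
    (convexOn_toReal_genLogMGF hc (convex_Icc 0 t₀) hfinite) ht'
  exact ⟨le_antisymm (hlower.trans (le_iSup_of_le _ le_rfl)) (iSup_le hupper), _,
    le_antisymm hlower (hupper _)⟩
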